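/- arXiv:1501.00471 — 2 statements merged into one kernel-verified Lean document; each statement's English description precedes it below -/
import Mathlib

section
/- Let N ≥ 1 and X = Σ_{k=0}^{N} Σ_{j=0}^{N−k} f_{j,k}(x,y) p₁^j p₂^{N−k−j} with smooth f_{j,k}: ℝ² → ℝ. If {H, X} = 0 identically on ℝ⁴, then the leading coefficients satisfy ∂_x f_{j−1,0} + ∂_y f_{j,0} = 0 on ℝ² for all 0 ≤ j ≤ N+1 (with the convention f_{−1,0} := 0 and f_{N+1,0} := 0); equivalently, the leading part Σ_{j=0}^{N} f_{j,0} p₁^j p₂^{N−j} Poisson-commutes with the free Hamiltonian p₁² + p₂². -/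
noncomputable section

/-- Partial derivative with respect to `x` of a function on `ℝ²`. -/
def pdx (f : ℝ × ℝ → ℝ) : ℝ × ℝ → ℝ := fun q => fderiv ℝ f q (1, 0)

/-- Partial derivative with respect to `y` of a function on `ℝ²`. -/
def pdy (f : ℝ × ℝ → ℝ) : ℝ × ℝ → ℝ := fun q => fderiv ℝ f q (0, 1)

/-- The Poisson bracket on phase space `ℝ⁴` with coordinates `(x, y, p₁, p₂)`. -/
def pbr (F G : ℝ × ℝ × ℝ × ℝ → ℝ) : ℝ × ℝ × ℝ × ℝ → ℝ := fun z =>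
  fderiv ℝ F z (0, 0, 1, 0) * fderiv ℝ G z (1, 0, 0, 0)
    + fderiv ℝ F z (0, 0, 0, 1) * fderiv ℝ G z (0, 1, 0, 0)
    - fderiv ℝ F z (1, 0, 0, 0) * fderiv ℝ G z (0, 0, 1, 0)
    - fderiv ℝ F z (0, 1, 0, 0) * fderiv ℝ G z (0, 0, 0, 1)

/-- The classical Hamiltonian `H = p₁² + p₂² + V(x,y)`. -/
def Ham (V : ℝ × ℝ → ℝ) : ℝ × ℝ × ℝ × ℝ → ℝ := fun z =>
  z.2.2.1 ^ 2 + z.2.2.2 ^ 2 + V (z.1, z.2.1)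

/-- The free Hamiltonian `H₀ = p₁² + p₂²`. -/
def Ham0 : ℝ × ℝ × ℝ × ℝ → ℝ := fun z => z.2.2.1 ^ 2 + z.2.2.2 ^ 2

/-- The candidate integral `X = Σ_{k=0}^{N} Σ_{j=0}^{N−k} f_{j,k}(x,y) p₁^j p₂^{N−k−j}`. -/
def Xfun (N : ℕ) (f : ℤ → ℤ → ℝ × ℝ → ℝ) : ℝ × ℝ × ℝ × ℝ → ℝ := fun z =>
  ∑ k ∈ Finset.range (N + 1), ∑ j ∈ Finset.range (N - k + 1),
    f (j : ℤ) (k : ℤ) (z.1, z.2.1) * z.2.2.1 ^ j * z.2.2.2 ^ (N - k - j)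

/-- The leading part `Σ_{j=0}^{N} f_{j,0} p₁^j p₂^{N−j}` of the integral. -/
def Xlead (N : ℕ) (f : ℤ → ℤ → ℝ × ℝ → ℝ) : ℝ × ℝ × ℝ × ℝ → ℝ := fun z =>
  ∑ j ∈ Finset.range (N + 1),
    f (j : ℤ) 0 (z.1, z.2.1) * z.2.2.1 ^ j * z.2.2.2 ^ (N - j)

/-! Scaling the momenta by `t`, `{H, X}` becomes a polynomial in `t` of degree `N + 1`, and only
the leading part of `X` paired with the kinetic part of `H` reaches `t ^ (N + 1)`: the potential
lowers the degree in `p` by one, and the lower parts of `X` start one degree lower. So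
`{H₀, X_lead} = 0`. Setting `p₂ = 1`, this bracket is a polynomial in `p₁` whose coefficient of
`p₁ⁿ` is `2 (∂ₓ f_{n-1,0} + ∂_y f_{n,0})`, and these coefficients must vanish. -/

open Polynomial ContinuousLinearMap

theorem fderiv_xy_apply (z v : ℝ × ℝ × ℝ × ℝ) :
    fderiv ℝ (fun z : ℝ × ℝ × ℝ × ℝ => (z.1, z.2.1)) z v = (v.1, v.2.1) :=
  congrArg (· v)
    ((fst ℝ ℝ (ℝ × ℝ × ℝ)).prod ((fst ℝ ℝ (ℝ × ℝ)).comp (snd ℝ ℝ (ℝ × ℝ × ℝ)))).fderiv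

theorem fderiv_p₁_apply (z v : ℝ × ℝ × ℝ × ℝ) :
    fderiv ℝ (fun z : ℝ × ℝ × ℝ × ℝ => z.2.2.1) z v = v.2.2.1 :=
  congrArg (· v) ((fst ℝ ℝ ℝ).comp ((snd ℝ ℝ (ℝ × ℝ)).comp (snd ℝ ℝ (ℝ × ℝ × ℝ)))).fderiv

theorem fderiv_p₂_apply (z v : ℝ × ℝ × ℝ × ℝ) :
    fderiv ℝ (fun z : ℝ × ℝ × ℝ × ℝ => z.2.2.2) z v = v.2.2.2 :=
  congrArg (· v) ((snd ℝ ℝ ℝ).comp ((snd ℝ ℝ (ℝ × ℝ)).comp (snd ℝ ℝ (ℝ × ℝ × ℝ)))).fderiv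

theorem fderiv_Ham_apply {V : ℝ × ℝ → ℝ} (hV : Differentiable ℝ V) (z v : ℝ × ℝ × ℝ × ℝ) :
    fderiv ℝ (Ham V) z v =
      2 * z.2.2.1 * v.2.2.1 + 2 * z.2.2.2 * v.2.2.2 + fderiv ℝ V (z.1, z.2.1) (v.1, v.2.1) := by
  unfold Ham
  rw [fderiv_fun_add (by fun_prop) (by fun_prop), fderiv_fun_add (by fun_prop) (by fun_prop),
    fderiv_fun_pow _ (by fun_prop), fderiv_fun_pow _ (by fun_prop),
    fderiv_fun_comp _ (hV _) (by fun_prop)]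
  simp only [add_apply, smul_apply, nsmul_eq_mul, smul_eq_mul, comp_apply, fderiv_xy_apply,
    fderiv_p₁_apply, fderiv_p₂_apply]
  ring

theorem Ham_zero : Ham 0 = Ham0 := by
  funext z
  simp [Ham, Ham0]

def pMonomial (g : ℝ × ℝ → ℝ) (a b : ℕ) : ℝ × ℝ × ℝ × ℝ → ℝ := fun z =>
  g (z.1, z.2.1) * z.2.2.1 ^ a * z.2.2.2 ^ b

theorem differentiable_pMonomial {g : ℝ × ℝ → ℝ} (hg : Differentiable ℝ g) (a b : ℕ) :
    Differentiable ℝ (pMonomial g a b) := by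
  unfold pMonomial
  fun_prop

theorem fderiv_pMonomial_apply {g : ℝ × ℝ → ℝ} (hg : Differentiable ℝ g) (a b : ℕ)
    (z v : ℝ × ℝ × ℝ × ℝ) :
    fderiv ℝ (pMonomial g a b) z v =
      fderiv ℝ g (z.1, z.2.1) (v.1, v.2.1) * z.2.2.1 ^ a * z.2.2.2 ^ b
        + g (z.1, z.2.1) * (a * z.2.2.1 ^ (a - 1) * v.2.2.1) * z.2.2.2 ^ b
        + g (z.1, z.2.1) * z.2.2.1 ^ a * (b * z.2.2.2 ^ (b - 1) * v.2.2.2) := by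
  unfold pMonomial
  rw [fderiv_fun_mul (by fun_prop) (by fun_prop), fderiv_fun_mul (by fun_prop) (by fun_prop),
    fderiv_fun_pow _ (by fun_prop), fderiv_fun_pow _ (by fun_prop),
    fderiv_fun_comp _ (hg _) (by fun_prop)]
  simp only [add_apply, smul_apply, nsmul_eq_mul, smul_eq_mul, comp_apply, fderiv_xy_apply,
    fderiv_p₁_apply, fderiv_p₂_apply]
  ring

theorem Xfun_eq_sum_pMonomial (N : ℕ) (f : ℤ → ℤ → ℝ × ℝ → ℝ) :
    Xfun N f = ∑ k ∈ Finset.range (N + 1), ∑ j ∈ Finset.range (N - k + 1),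
      pMonomial (f j k) j (N - k - j) := by
  funext z
  simp only [Xfun, pMonomial, Finset.sum_apply]

theorem Xlead_eq_sum_pMonomial (N : ℕ) (f : ℤ → ℤ → ℝ × ℝ → ℝ) :
    Xlead N f = ∑ j ∈ Finset.range (N + 1), pMonomial (f j 0) j (N - j) := by
  funext z
  simp only [Xlead, pMonomial, Finset.sum_apply]

theorem pbr_sum_right {ι : Type*} (s : Finset ι) (F : ℝ × ℝ × ℝ × ℝ → ℝ)
    {G : ι → ℝ × ℝ × ℝ × ℝ → ℝ} (hG : ∀ i ∈ s, Differentiable ℝ (G i)) (z : ℝ × ℝ × ℝ × ℝ) :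
    pbr F (∑ i ∈ s, G i) z = ∑ i ∈ s, pbr F (G i) z := by
  simp only [pbr, fderiv_sum fun i hi => (hG i hi).differentiableAt, sum_apply,
    Finset.mul_sum, ← Finset.sum_add_distrib, ← Finset.sum_sub_distrib]

theorem pbr_Ham_pMonomial {V g : ℝ × ℝ → ℝ} (hV : Differentiable ℝ V) (hg : Differentiable ℝ g)
    (a b : ℕ) (z : ℝ × ℝ × ℝ × ℝ) :
    pbr (Ham V) (pMonomial g a b) z =
      2 * (z.2.2.1 * pdx g (z.1, z.2.1) + z.2.2.2 * pdy g (z.1, z.2.1)) * z.2.2.1 ^ a * z.2.2.2 ^ b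
        - g (z.1, z.2.1) * (pdx V (z.1, z.2.1) * a * z.2.2.1 ^ (a - 1) * z.2.2.2 ^ b
          + pdy V (z.1, z.2.1) * b * z.2.2.1 ^ a * z.2.2.2 ^ (b - 1)) := by
  simp only [pbr, pdx, pdy, fderiv_Ham_apply hV, fderiv_pMonomial_apply hg]
  simp only [Prod.mk_zero_zero, map_zero]
  ring

theorem pbr_Ham0_pMonomial {g : ℝ × ℝ → ℝ} (hg : Differentiable ℝ g) (a b : ℕ)
    (z : ℝ × ℝ × ℝ × ℝ) :
    pbr Ham0 (pMonomial g a b) z =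
      2 * (z.2.2.1 * pdx g (z.1, z.2.1) + z.2.2.2 * pdy g (z.1, z.2.1))
        * z.2.2.1 ^ a * z.2.2.2 ^ b := by
  rw [← Ham_zero, pbr_Ham_pMonomial (by fun_prop) hg]
  simp [pdx, pdy]

/-- The exponents `a - 1 + b` and `a + (b - 1)` (rather than `a + b - 1`) match
`(t p₁) ^ (a - 1) * (t p₂) ^ b` also when `a = 0`. -/
def rayBracketPoly (V g : ℝ × ℝ → ℝ) (a b : ℕ) (z : ℝ × ℝ × ℝ × ℝ) : ℝ[X] :=
  C (pbr Ham0 (pMonomial g a b) z) * X ^ (a + b + 1)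
    - C (g (z.1, z.2.1) * pdx V (z.1, z.2.1) * a * z.2.2.1 ^ (a - 1) * z.2.2.2 ^ b)
      * X ^ (a - 1 + b)
    - C (g (z.1, z.2.1) * pdy V (z.1, z.2.1) * b * z.2.2.1 ^ a * z.2.2.2 ^ (b - 1))
      * X ^ (a + (b - 1))

theorem pbr_Ham_pMonomial_ray {V g : ℝ × ℝ → ℝ} (hV : Differentiable ℝ V)
    (hg : Differentiable ℝ g) (a b : ℕ) (z : ℝ × ℝ × ℝ × ℝ) (t : ℝ) :
    pbr (Ham V) (pMonomial g a b) (z.1, z.2.1, t * z.2.2.1, t * z.2.2.2) =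
      (rayBracketPoly V g a b z).eval t := by
  simp only [pbr_Ham_pMonomial hV hg, rayBracketPoly, pbr_Ham0_pMonomial hg, eval_sub, eval_mul,
    eval_C, eval_pow, eval_X, mul_pow, pow_add]
  ring

theorem coeff_rayBracketPoly_of_le (V g : ℝ × ℝ → ℝ) {a b n : ℕ} (h : a + b + 1 ≤ n)
    (z : ℝ × ℝ × ℝ × ℝ) :
    (rayBracketPoly V g a b z).coeff n =
      if n = a + b + 1 then pbr Ham0 (pMonomial g a b) z else 0 := by
  simp only [rayBracketPoly, coeff_sub, coeff_C_mul_X_pow, if_neg (show n ≠ a - 1 + b by omega),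
    if_neg (show n ≠ a + (b - 1) by omega), sub_zero]

theorem pbr_Ham0_Xlead_eq_zero {N : ℕ} {V : ℝ × ℝ → ℝ} (hV : Differentiable ℝ V)
    {f : ℤ → ℤ → ℝ × ℝ → ℝ} (hf : ∀ j k, Differentiable ℝ (f j k))
    (hcomm : ∀ z, pbr (Ham V) (Xfun N f) z = 0) (z : ℝ × ℝ × ℝ × ℝ) :
    pbr Ham0 (Xlead N f) z = 0 := by
  have hmono (j k : ℤ) (a b : ℕ) := differentiable_pMonomial (hf j k) a b
  set P := ∑ k ∈ Finset.range (N + 1), ∑ j ∈ Finset.range (N - k + 1),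
    rayBracketPoly V (f j k) j (N - k - j) z
  have hP : P = 0 := Polynomial.funext fun t => by
    rw [eval_zero, ← hcomm (z.1, z.2.1, t * z.2.2.1, t * z.2.2.2), Xfun_eq_sum_pMonomial,
      pbr_sum_right _ _ fun k _ => Differentiable.sum fun j _ => hmono _ _ _ _]
    simp only [P, eval_finsetSum, pbr_Ham_pMonomial_ray hV (hf _ _),
      pbr_sum_right _ _ fun j _ => hmono _ _ _ _]
  have htop : P.coeff (N + 1) = pbr Ham0 (Xlead N f) z := by
    rw [Xlead_eq_sum_pMonomial, pbr_sum_right _ _ fun j _ => hmono _ _ _ _]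
    simp only [P, finsetSum_coeff]
    rw [Finset.sum_eq_single_of_mem 0 (by simp)]
    · refine Finset.sum_congr rfl fun j hj => ?_
      simp only [Finset.mem_range] at hj
      rw [coeff_rayBracketPoly_of_le _ _ (by omega), if_pos (by omega), Nat.sub_zero,
        Nat.cast_zero]
    · intro k hk hk0
      refine Finset.sum_eq_zero fun j hj => ?_
      simp only [Finset.mem_range] at hk hj
      rw [coeff_rayBracketPoly_of_le _ _ (by omega), if_neg (by omega)]
  rw [← htop, hP, coeff_zero]

theorem pbr_Ham0_Xlead_dehomogenize {N : ℕ} {f : ℤ → ℤ → ℝ × ℝ → ℝ}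
    (hf : ∀ j, Differentiable ℝ (f j 0)) (hlow : f (-1) 0 = 0) (hhigh : f (N + 1) 0 = 0)
    (q : ℝ × ℝ) (u : ℝ) :
    pbr Ham0 (Xlead N f) (q.1, q.2, u, 1) =
      ∑ n ∈ Finset.range (N + 2), 2 * (pdx (f (n - 1) 0) q + pdy (f n 0) q) * u ^ n := by
  rw [Xlead_eq_sum_pMonomial, pbr_sum_right _ _ fun j _ => differentiable_pMonomial (hf _) _ _]
  simp only [pbr_Ham0_pMonomial (hf _), one_pow, mul_one, mul_add, add_mul, Finset.sum_add_distrib]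
  congr 1
  · conv_rhs => rw [Finset.sum_range_succ']
    simp only [Nat.cast_add, Nat.cast_one, add_sub_cancel_right, Nat.cast_zero, zero_sub, hlow,
      pdx, fderiv_zero, Pi.zero_apply, zero_apply, Prod.mk.eta, mul_zero, zero_mul, add_zero]
    exact Finset.sum_congr rfl fun j _ => by ring
  · rw [Finset.sum_range_succ _ (N + 1)]
    simp only [Nat.cast_add, Nat.cast_one, hhigh, pdy, fderiv_zero, Pi.zero_apply, zero_apply,
      Prod.mk.eta, one_mul, mul_zero, zero_mul, add_zero]

theorem eq_zero_of_forall_sum_mul_pow_eq_zero {R : Type*} [CommRing R] [IsDomain R] [Infinite R]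
    {d : ℕ} {c : ℕ → R} (h : ∀ u, ∑ n ∈ Finset.range d, c n * u ^ n = 0) {n : ℕ} (hn : n < d) :
    c n = 0 := by
  have hP : ∑ i ∈ Finset.range d, C (c i) * X ^ i = 0 :=
    Polynomial.funext fun u => by simpa [eval_finsetSum] using h u
  simpa [finsetSum_coeff, coeff_C_mul_X_pow, hn] using congrArg (coeff · n) hP

theorem stmt_2_general (N : ℕ) (V : ℝ × ℝ → ℝ) (hV : ContDiff ℝ (⊤ : ℕ∞) V)
    (f : ℤ → ℤ → ℝ × ℝ → ℝ) (hf : ∀ j k, ContDiff ℝ (⊤ : ℕ∞) (f j k))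
    (hzero : ∀ j k : ℤ, (j < 0 ∨ k < 0 ∨ (N : ℤ) < j + k) → f j k = 0)
    (hcomm : ∀ z : ℝ × ℝ × ℝ × ℝ, pbr (Ham V) (Xfun N f) z = 0) :
    (∀ j : ℤ, 0 ≤ j → j ≤ (N : ℤ) + 1 →
        ∀ q : ℝ × ℝ, pdx (f (j - 1) 0) q + pdy (f j 0) q = 0) ∧
      (∀ z : ℝ × ℝ × ℝ × ℝ, pbr Ham0 (Xlead N f) z = 0) := by
  have hf' (j k : ℤ) : Differentiable ℝ (f j k) := (hf j k).differentiable (by simp)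
  have hlead := pbr_Ham0_Xlead_eq_zero (hV.differentiable (by simp)) hf' hcomm
  refine ⟨fun j hj0 hj1 q => ?_, hlead⟩
  lift j to ℕ using hj0
  have hlow : f (-1) 0 = 0 := hzero _ _ (by omega)
  have hhigh : f (N + 1) 0 = 0 := hzero _ _ (by omega)
  have hcoeff := eq_zero_of_forall_sum_mul_pow_eq_zero (n := j) (fun u => by
    rw [← pbr_Ham0_Xlead_dehomogenize (fun j => hf' j 0) hlow hhigh q u]
    exact hlead _) (by omega)
  simpa using hcoeff

/-- if `{H, X} = 0` identically on `ℝ⁴`, then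
`∂_x f_{j−1,0} + ∂_y f_{j,0} = 0` on `ℝ²` for all `0 ≤ j ≤ N+1` (with the convention
`f_{−1,0} = f_{N+1,0} = 0`); equivalently, the leading part Poisson-commutes with the
free Hamiltonian `p₁² + p₂²`. -/
theorem stmt_2 (N : ℕ) (hN : 1 ≤ N) (V : ℝ × ℝ → ℝ) (hV : ContDiff ℝ (⊤ : ℕ∞) V)
    (f : ℤ → ℤ → ℝ × ℝ → ℝ) (hf : ∀ j k, ContDiff ℝ (⊤ : ℕ∞) (f j k))
    (hzero : ∀ j k : ℤ, (j < 0 ∨ k < 0 ∨ (N : ℤ) < j + k) → f j k = 0)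
    (hcomm : ∀ z : ℝ × ℝ × ℝ × ℝ, pbr (Ham V) (Xfun N f) z = 0) :
    (∀ j : ℤ, 0 ≤ j → j ≤ (N : ℤ) + 1 →
        ∀ q : ℝ × ℝ, pdx (f (j - 1) 0) q + pdy (f j 0) q = 0) ∧
      (∀ z : ℝ × ℝ × ℝ × ℝ, pbr Ham0 (Xlead N f) z = 0) :=
  stmt_2_general N V hV f hf hzero hcomm
end
end

section
/- Let N ≥ 1 and f_j: ℝ² → ℝ be smooth for 0 ≤ j ≤ N, with the convention f_{−1} := 0 and f_{N+1} := 0. Then the system ∂_x f_{j−1} + ∂_y f_j = 0 holds on ℝ² for all 0 ≤ j ≤ N+1 if and only if there exist real constants A_{N−n−m,m,n}, one for each pair of integers m, n ≥ 0 with m + n ≤ N, such that for every 0 ≤ j ≤ N and all (x,y) ∈ ℝ²: f_j(x,y) = Σ_{n=0}^{N−j} Σ_{m=0}^{j} C(N−n−m, j−m) · A_{N−n−m,m,n} · x^{N−j−n} (−y)^{j−m}, where C(·,·) denotes the binomial coefficient (equal to 0 when the lower entry is negative or exceeds the upper entry). In particular, the solution space of the system is a real vector space of dimension (N+1)(N+2)/2.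 -/
noncomputable section

/-! The system says `∂_y f_j = -∂_x f_{j-1}`. Extending the family by zero outside `0 ≤ j ≤ N`
and iterating gives `∂_y^b f_j = (-1)^b ∂_x^b f_{j-b}` for all `j` and `b`; in particular
`∂_y^{j+1} f_j = 0` and `∂_x^{N+1-j} f_j = 0`. Taylor expansion of `f_j` in `y`, and then of the
coefficients `∂_y^b f_j (x, 0) = (-1)^b ∂_x^b f_{j-b} (x, 0)` in `x`, shows that `f_j` is the
polynomial with coefficients `∂_x^{a+b} f_{j-b} (0, 0) / (a! b!)`, which is the claimed form.
Conversely, such polynomial families solve the system because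
`(a+1) C(a+b+1, b) = (b+1) C(a+b+1, b+1)`. -/

open Finset
open scoped ContDiff Nat

theorem eq_sum_of_iteratedDeriv_eq_zero {h : ℝ → ℝ} {n : ℕ} (hh : ContDiff ℝ (n + 1) h)
    (hd : iteratedDeriv (n + 1) h = 0) (x : ℝ) :
    h x = ∑ k ∈ range (n + 1), iteratedDeriv k h 0 * x ^ k / k ! := by
  rcases eq_or_ne x 0 with rfl | hx
  · simp [sum_range_succ']
  obtain ⟨x', -, hx'⟩ := taylor_mean_remainder_lagrange_iteratedDeriv hx.symm hh.contDiffOn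
  rw [hd, Pi.zero_apply, zero_mul, zero_div, sub_eq_zero, taylor_within_apply] at hx'
  rw [hx']
  refine sum_congr rfl fun k hk => ?_
  rw [iteratedDerivWithin_eq_iteratedDeriv (uniqueDiffOn_uIcc hx.symm)
    (hh.contDiffAt.of_le (by exact_mod_cast (mem_range.1 hk).le)) Set.left_mem_uIcc]
  simp only [sub_zero, smul_eq_mul]
  ring

section DirDeriv

variable {E F : Type*} [NormedAddCommGroup E] [NormedSpace ℝ E] [NormedAddCommGroup F]
  [NormedSpace ℝ F] {f : E → F}

def dirDeriv (v : E) (f : E → F) : E → F := fun x => fderiv ℝ f x v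

theorem ContDiff.dirDeriv (hf : ContDiff ℝ ∞ f) (v : E) : ContDiff ℝ ∞ (_root_.dirDeriv v f) :=
  (contDiff_infty_iff_fderiv.1 hf).2.clm_apply contDiff_const

theorem ContDiff.iterate_dirDeriv (hf : ContDiff ℝ ∞ f) (v : E) (k : ℕ) :
    ContDiff ℝ ∞ ((_root_.dirDeriv v)^[k] f) :=
  Function.Iterate.rec (fun g => ContDiff ℝ ∞ g) hf (fun _ hg => hg.dirDeriv v) k

theorem dirDeriv_comm (hf : ContDiff ℝ 2 f) (v w : E) :
    dirDeriv v (dirDeriv w f) = dirDeriv w (dirDeriv v f) := by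
  funext x
  have hdf : DifferentiableAt ℝ (fderiv ℝ f) x :=
    (hf.fderiv_right (m := 1) le_rfl).differentiable one_ne_zero x
  show fderiv ℝ (fun y => fderiv ℝ f y w) x v = fderiv ℝ (fun y => fderiv ℝ f y v) x w
  rw [fderiv_clm_apply hdf (differentiableAt_const _),
    fderiv_clm_apply hdf (differentiableAt_const _)]
  simpa using (hf.contDiffAt.isSymmSndFDerivAt (by simp)) v w

theorem dirDeriv_iterate_dirDeriv_comm (hf : ContDiff ℝ ∞ f) (v w : E) (k : ℕ) :
    dirDeriv w ((dirDeriv v)^[k] f) = (dirDeriv v)^[k] (dirDeriv w f) := by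
  induction k generalizing f with
  | zero => rfl
  | succ k ih =>
    rw [Function.iterate_succ_apply, Function.iterate_succ_apply, ih (hf.dirDeriv v),
      dirDeriv_comm (hf.of_le (by norm_cast))]

theorem dirDeriv_smul (v : E) (c : ℝ) (f : E → F) : dirDeriv v (c • f) = c • dirDeriv v f := by
  funext x
  simp [dirDeriv, fderiv_const_smul_field]

theorem iterate_dirDeriv_smul (v : E) (c : ℝ) (f : E → F) (k : ℕ) :
    (dirDeriv v)^[k] (c • f) = c • (dirDeriv v)^[k] f :=
  Function.Commute.iterate_left (fun f => dirDeriv_smul v c f) k f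

theorem dirDeriv_zero (v : E) : dirDeriv v (0 : E → F) = 0 := by
  funext x
  simp [dirDeriv]

theorem hasDerivAt_comp_add_smul (hf : Differentiable ℝ f) (x v : E) (t : ℝ) :
    HasDerivAt (fun s : ℝ => f (x + s • v)) (dirDeriv v f (x + t • v)) t := by
  have hline : HasDerivAt (fun s : ℝ => x + s • v) v t := by
    simpa using ((hasDerivAt_id t).smul_const v).const_add x
  exact (hf _).hasFDerivAt.comp_hasDerivAt t hline

theorem iteratedDeriv_comp_add_smul (hf : ContDiff ℝ ∞ f) (x v : E) (k : ℕ) :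
    iteratedDeriv k (fun s : ℝ => f (x + s • v)) = fun t => (dirDeriv v)^[k] f (x + t • v) := by
  induction k with
  | zero => rfl
  | succ k ih =>
    funext t
    rw [iteratedDeriv_succ, ih, Function.iterate_succ_apply']
    have hk : Differentiable ℝ ((dirDeriv v)^[k] f) :=
      (hf.iterate_dirDeriv v k).differentiable (by simp)
    exact (hasDerivAt_comp_add_smul hk x v t).deriv

theorem eq_sum_of_iterate_dirDeriv_eq_zero {f : E → ℝ} (hf : ContDiff ℝ ∞ f) {v : E} {n : ℕ}
    (hn : (dirDeriv v)^[n + 1] f = 0) (x : E) (t : ℝ) :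
    f (x + t • v) = ∑ k ∈ range (n + 1), (dirDeriv v)^[k] f x * t ^ k / k ! := by
  have hline : ContDiff ℝ ∞ (fun s : ℝ => f (x + s • v)) := by fun_prop
  have h := eq_sum_of_iteratedDeriv_eq_zero (hline.of_le (by exact_mod_cast le_top))
    (by rw [iteratedDeriv_comp_add_smul hf, hn]; rfl) t
  simpa [iteratedDeriv_comp_add_smul hf] using h

end DirDeriv

section Plane

theorem pdx_eq_dirDeriv : pdx = dirDeriv ((1, 0) : ℝ × ℝ) := rfl

theorem pdy_eq_dirDeriv : pdy = dirDeriv ((0, 1) : ℝ × ℝ) := rfl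

@[simp] theorem pdx_zero : pdx 0 = 0 := dirDeriv_zero _

@[simp] theorem pdy_zero : pdy 0 = 0 := dirDeriv_zero _

theorem zero_mk_add_smul_one_zero (x y : ℝ) : ((0, y) : ℝ × ℝ) + x • (1, 0) = (x, y) := by simp

theorem mk_zero_add_smul_zero_one (x y : ℝ) : ((x, 0) : ℝ × ℝ) + y • (0, 1) = (x, y) := by simp

variable {g : ℝ × ℝ → ℝ}

theorem hasDerivAt_pdx (hg : Differentiable ℝ g) (x y : ℝ) :
    HasDerivAt (fun s => g (s, y)) (pdx g (x, y)) x := by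
  have h := hasDerivAt_comp_add_smul hg (0, y) (1, 0) x
  simp only [zero_mk_add_smul_one_zero] at h
  exact h

theorem hasDerivAt_pdy (hg : Differentiable ℝ g) (x y : ℝ) :
    HasDerivAt (fun s => g (x, s)) (pdy g (x, y)) y := by
  have h := hasDerivAt_comp_add_smul hg (x, 0) (0, 1) y
  simp only [mk_zero_add_smul_zero_one] at h
  exact h

theorem ContDiff.iterate_pdx (hg : ContDiff ℝ ∞ g) (k : ℕ) : ContDiff ℝ ∞ (pdx^[k] g) :=
  hg.iterate_dirDeriv _ k

theorem eq_sum_of_iterate_pdx_eq_zero (hg : ContDiff ℝ ∞ g) {n : ℕ} (hn : pdx^[n + 1] g = 0)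
    (x y : ℝ) :
    g (x, y) = ∑ a ∈ range (n + 1), pdx^[a] g (0, y) * x ^ a / a ! := by
  have h := eq_sum_of_iterate_dirDeriv_eq_zero hg hn (0, y) x
  simp only [zero_mk_add_smul_one_zero] at h
  exact h

theorem eq_sum_of_iterate_pdy_eq_zero (hg : ContDiff ℝ ∞ g) {n : ℕ} (hn : pdy^[n + 1] g = 0)
    (x y : ℝ) :
    g (x, y) = ∑ b ∈ range (n + 1), pdy^[b] g (x, 0) * y ^ b / b ! := by
  have h := eq_sum_of_iterate_dirDeriv_eq_zero hg hn (x, 0) y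
  simp only [mk_zero_add_smul_zero_one] at h
  exact h

end Plane

def monomialSum (c : ℕ → ℕ → ℝ) (I J : ℕ) (q : ℝ × ℝ) : ℝ :=
  ∑ a ∈ range I, ∑ b ∈ range J, c a b * q.1 ^ a * (-q.2) ^ b

section MonomialSum

variable (c : ℕ → ℕ → ℝ) (I J : ℕ)

theorem contDiff_monomialSum : ContDiff ℝ ∞ (monomialSum c I J) := by
  unfold monomialSum
  fun_prop

@[simp] theorem monomialSum_zero_left : monomialSum c 0 J = 0 := by
  funext q
  simp [monomialSum]

@[simp] theorem monomialSum_zero_right : monomialSum c I 0 = 0 := by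
  funext q
  simp [monomialSum]

variable {c I J} in
theorem monomialSum_congr {c' : ℕ → ℕ → ℝ} (h : ∀ a < I, ∀ b < J, c a b = c' a b) :
    monomialSum c I J = monomialSum c' I J := by
  funext q
  exact sum_congr rfl fun a ha => sum_congr rfl fun b hb => by
    rw [h a (mem_range.1 ha) b (mem_range.1 hb)]

theorem pdx_monomialSum :
    pdx (monomialSum c (I + 1) J) = monomialSum (fun a b => (a + 1) * c (a + 1) b) I J := by
  funext ⟨x, y⟩
  have h : HasDerivAt (fun s => ∑ a ∈ range (I + 1), ∑ b ∈ range J, c a b * s ^ a * (-y) ^ b)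
      (∑ a ∈ range (I + 1), ∑ b ∈ range J, c a b * (a * x ^ (a - 1)) * (-y) ^ b) x :=
    HasDerivAt.fun_sum fun a _ => HasDerivAt.fun_sum fun b _ =>
      ((hasDerivAt_pow a x).const_mul (c a b)).mul_const _
  rw [(hasDerivAt_pdx ((contDiff_monomialSum c _ _).differentiable (by simp)) x y).unique h,
    sum_range_succ']
  simp only [monomialSum, CharP.cast_eq_zero, zero_mul, mul_zero, sum_const_zero, add_zero]
  refine sum_congr rfl fun a _ => sum_congr rfl fun b _ => ?_
  push_cast
  ring

theorem pdy_monomialSum :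
    pdy (monomialSum c I (J + 1)) = -monomialSum (fun a b => (b + 1) * c a (b + 1)) I J := by
  funext ⟨x, y⟩
  have h : HasDerivAt (fun s => ∑ a ∈ range I, ∑ b ∈ range (J + 1), c a b * x ^ a * (-s) ^ b)
      (∑ a ∈ range I, ∑ b ∈ range (J + 1), c a b * x ^ a * (b * (-y) ^ (b - 1) * -1)) y :=
    HasDerivAt.fun_sum fun a _ => HasDerivAt.fun_sum fun b _ =>
      ((hasDerivAt_pow b (-y)).comp y (hasDerivAt_neg y)).const_mul _
  rw [(hasDerivAt_pdy ((contDiff_monomialSum c _ _).differentiable (by simp)) x y).unique h]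
  simp only [monomialSum, Pi.neg_apply, ← sum_neg_distrib]
  refine sum_congr rfl fun a _ => ?_
  rw [sum_range_succ']
  simp only [CharP.cast_eq_zero, zero_mul, mul_zero, add_zero]
  refine sum_congr rfl fun b _ => ?_
  push_cast
  ring

end MonomialSum

/-- In the indices of the statement, `a = N - j - n` and `b = j - m`. -/
def solutionCoeff (N : ℕ) (A : ℕ → ℕ → ℝ) (j a b : ℕ) : ℝ :=
  (a + b).choose b * A (j - b) (N - j - a)

theorem sum_choose_eq_monomialSum (N : ℕ) (A : ℕ → ℕ → ℝ) {j : ℕ} (hj : j ≤ N) (q : ℝ × ℝ) :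
    ∑ n ∈ range (N - j + 1), ∑ m ∈ range (j + 1),
      ((N - n - m).choose (j - m) : ℝ) * A m n * q.1 ^ (N - j - n) * (-q.2) ^ (j - m) =
      monomialSum (solutionCoeff N A j) (N - j + 1) (j + 1) q := by
  rw [monomialSum, ← sum_range_reflect]
  refine sum_congr rfl fun a ha => ?_
  rw [← sum_range_reflect]
  refine sum_congr rfl fun b hb => ?_
  rw [mem_range] at ha hb
  rw [solutionCoeff, show N - j + 1 - 1 - a = N - j - a by omega,
    show j + 1 - 1 - b = j - b by omega, show N - (N - j - a) - (j - b) = a + b by omega,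
    show j - (j - b) = b by omega, show N - j - (N - j - a) = a by omega]

theorem pdx_add_pdy_monomialSum_solutionCoeff (N : ℕ) (A : ℕ → ℕ → ℝ) {k : ℕ} (hk : k < N) :
    pdx (monomialSum (solutionCoeff N A k) (N - k + 1) (k + 1)) +
      pdy (monomialSum (solutionCoeff N A (k + 1)) (N - (k + 1) + 1) (k + 1 + 1)) = 0 := by
  rw [show N - (k + 1) + 1 = N - k by omega, pdx_monomialSum, pdy_monomialSum, add_neg_eq_zero]
  refine monomialSum_congr fun a _ b _ => ?_
  have hchoose : ((a + b + 1).choose (b + 1) : ℝ) * (b + 1) = (a + b + 1).choose b * (a + 1) := by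
    exact_mod_cast (Nat.choose_succ_right_eq (a + b + 1) b).trans (by congr 1; omega)
  rw [solutionCoeff, solutionCoeff, show k + 1 - (b + 1) = k - b by omega,
    show N - k - (a + 1) = N - (k + 1) - a by omega, show a + 1 + b = a + b + 1 by ring]
  linear_combination (-A (k - b) (N - (k + 1) - a)) * hchoose

section LeadingOrderSystem

variable {g : ℤ → ℝ × ℝ → ℝ} (hg : ∀ j, ContDiff ℝ ∞ (g j))
  (hsys : ∀ j, pdx (g (j - 1)) + pdy (g j) = 0)
include hg hsys

theorem iterate_pdy_eq_iterate_pdx (b : ℕ) (j : ℤ) :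
    pdy^[b] (g j) = (-1 : ℝ) ^ b • pdx^[b] (g (j - b)) := by
  rw [pdx_eq_dirDeriv, pdy_eq_dirDeriv] at *
  induction b with
  | zero => simp
  | succ b ih =>
    have hstep : dirDeriv (0, 1) (g (j - b)) =
        (-1 : ℝ) • dirDeriv (1, 0) (g (j - (b + 1 : ℕ))) := by
      rw [neg_one_smul, eq_neg_iff_add_eq_zero, add_comm, ← hsys (j - b)]
      push_cast
      ring_nf
    rw [Function.iterate_succ_apply', ih, dirDeriv_smul, dirDeriv_iterate_dirDeriv_comm (hg _),
      hstep, iterate_dirDeriv_smul, ← Function.iterate_succ_apply, smul_smul, pow_succ]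

theorem iterate_pdy_eq_zero {j : ℤ} {b : ℕ} (hb : g (j - b) = 0) : pdy^[b] (g j) = 0 := by
  rw [iterate_pdy_eq_iterate_pdx hg hsys, hb, Function.iterate_fixed pdx_zero, smul_zero]

theorem iterate_pdx_eq_zero {j : ℤ} {a : ℕ} (ha : g (j + a) = 0) : pdx^[a] (g j) = 0 := by
  have h := iterate_pdy_eq_iterate_pdx hg hsys a (j + a)
  rw [ha, Function.iterate_fixed pdy_zero, add_sub_cancel_right] at h
  exact (smul_eq_zero.1 h.symm).resolve_left (pow_ne_zero _ (by norm_num))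

variable {N : ℕ} (hlow : ∀ j < 0, g j = 0) (hhigh : ∀ j : ℤ, N < j → g j = 0)
include hlow hhigh

theorem eq_monomialSum_of_pdx_add_pdy_eq_zero {j : ℕ} (hj : j ≤ N) :
    g j = monomialSum (fun a b => pdx^[a + b] (g (j - b)) (0, 0) / (a ! * b !))
      (N - j + 1) (j + 1) := by
  funext ⟨x, y⟩
  have hy : pdy^[j + 1] (g j) = 0 := iterate_pdy_eq_zero hg hsys (hlow _ (by push_cast; omega))
  rw [eq_sum_of_iterate_pdy_eq_zero (hg j) hy x y, monomialSum, sum_comm]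
  refine sum_congr rfl fun b hb => ?_
  have hb : b ≤ j := Nat.lt_succ_iff.1 (mem_range.1 hb)
  have hx : pdx^[N - j + 1] (pdx^[b] (g (j - b))) = 0 := by
    rw [← Function.iterate_add_apply]
    exact iterate_pdx_eq_zero hg hsys (hhigh _ (by push_cast; omega))
  rw [iterate_pdy_eq_iterate_pdx hg hsys, Pi.smul_apply, smul_eq_mul,
    eq_sum_of_iterate_pdx_eq_zero ((hg _).iterate_pdx b) hx x 0, mul_sum, sum_mul, sum_div]
  refine sum_congr rfl fun a _ => ?_
  rw [← Function.iterate_add_apply, neg_pow y]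
  field_simp

theorem exists_solutionCoeff_of_pdx_add_pdy_eq_zero :
    ∃ A : ℕ → ℕ → ℝ, ∀ j : ℕ, j ≤ N →
      g j = monomialSum (solutionCoeff N A j) (N - j + 1) (j + 1) := by
  refine ⟨fun m n => pdx^[N - n - m] (g m) (0, 0) / (N - n - m)!, fun j hj => ?_⟩
  rw [eq_monomialSum_of_pdx_add_pdy_eq_zero hg hsys hlow hhigh hj]
  refine monomialSum_congr fun a ha b hb => ?_
  rw [solutionCoeff, show N - (N - j - a) - (j - b) = a + b by omega,
    Nat.cast_sub (by omega : b ≤ j), ← Nat.add_choose_mul_factorial_mul_factorial a b]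
  have hchoose : ((a + b).choose b : ℝ) ≠ 0 := by
    exact_mod_cast (Nat.choose_pos (Nat.le_add_left b a)).ne'
  push_cast
  field_simp

end LeadingOrderSystem

def truncate (N : ℕ) (f : ℤ → ℝ × ℝ → ℝ) (j : ℤ) : ℝ × ℝ → ℝ :=
  if 0 ≤ j ∧ j ≤ N then f j else 0

section Truncate

variable {N : ℕ} {f : ℤ → ℝ × ℝ → ℝ}

theorem truncate_of_mem {j : ℤ} (h₀ : 0 ≤ j) (h₁ : j ≤ N) : truncate N f j = f j :=
  if_pos ⟨h₀, h₁⟩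

theorem truncate_of_lt_zero {j : ℤ} (h : j < 0) : truncate N f j = 0 :=
  if_neg (by omega)

theorem truncate_of_lt {j : ℤ} (h : (N : ℤ) < j) : truncate N f j = 0 :=
  if_neg (by omega)

theorem contDiff_truncate (hf : ∀ j : ℤ, 0 ≤ j → j ≤ N → ContDiff ℝ ∞ (f j)) (j : ℤ) :
    ContDiff ℝ ∞ (truncate N f j) := by
  unfold truncate
  split_ifs with h
  exacts [hf j h.1 h.2, contDiff_const]

theorem pdx_add_pdy_truncate (hneg : f (-1) = 0) (htop : f (N + 1) = 0)
    (hsys : ∀ j : ℤ, 0 ≤ j → j ≤ N + 1 → ∀ q, pdx (f (j - 1)) q + pdy (f j) q = 0) (j : ℤ) :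
    pdx (truncate N f (j - 1)) + pdy (truncate N f j) = 0 := by
  have hf : ∀ i : ℤ, -1 ≤ i → i ≤ N + 1 → truncate N f i = f i := by
    intro i h₁ h₂
    by_cases hi : 0 ≤ i ∧ i ≤ N
    · exact truncate_of_mem hi.1 hi.2
    obtain rfl | rfl : i = -1 ∨ i = N + 1 := by omega
    · rw [truncate_of_lt_zero (by norm_num), hneg]
    · rw [truncate_of_lt (by omega), htop]
  by_cases hj : 0 ≤ j ∧ j ≤ N + 1
  · rw [hf j (by omega) hj.2, hf (j - 1) (by omega) (by omega)]
    exact funext (hsys j hj.1 hj.2)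
  · rcases not_and_or.1 hj with hj | hj
    · simp [truncate_of_lt_zero (by omega : j < 0), truncate_of_lt_zero (by omega : j - 1 < 0)]
    · simp [truncate_of_lt (by omega : (N : ℤ) < j), truncate_of_lt (by omega : (N : ℤ) < j - 1)]

end Truncate

theorem stmt_3_general (N : ℕ) (f : ℤ → ℝ × ℝ → ℝ)
    (hf : ∀ j : ℤ, 0 ≤ j → j ≤ (N : ℤ) → ContDiff ℝ (⊤ : ℕ∞) (f j))
    (hneg : f (-1) = 0) (htop : f ((N : ℤ) + 1) = 0) :
    (∀ j : ℤ, 0 ≤ j → j ≤ (N : ℤ) + 1 →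
        ∀ q : ℝ × ℝ, pdx (f (j - 1)) q + pdy (f j) q = 0) ↔
      (∃ A : ℕ → ℕ → ℝ, ∀ j : ℕ, j ≤ N → ∀ q : ℝ × ℝ,
        f (j : ℤ) q =
          ∑ n ∈ Finset.range (N - j + 1), ∑ m ∈ Finset.range (j + 1),
            (Nat.choose (N - n - m) (j - m) : ℝ) * A m n *
              q.1 ^ (N - j - n) * (-q.2) ^ (j - m)) := by
  constructor
  · intro hsys
    obtain ⟨A, hA⟩ := exists_solutionCoeff_of_pdx_add_pdy_eq_zero (contDiff_truncate hf)
      (pdx_add_pdy_truncate hneg htop hsys) (fun _ => truncate_of_lt_zero) (fun _ => truncate_of_lt)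
    refine ⟨A, fun j hj q => ?_⟩
    rw [sum_choose_eq_monomialSum N A hj, ← hA j hj, truncate_of_mem (by omega) (by omega)]
  · rintro ⟨A, hA⟩ j hj₀ hj₁
    have hpoly : ∀ k : ℕ, k ≤ N → f k = monomialSum (solutionCoeff N A k) (N - k + 1) (k + 1) :=
      fun k hk => funext fun q => (hA k hk q).trans (sum_choose_eq_monomialSum N A hk q)
    lift j to ℕ using hj₀
    intro q
    rcases j with _ | k
    · rw [hpoly 0 N.zero_le, Nat.cast_zero, zero_sub, hneg, pdy_monomialSum]
      simp
    obtain hk | rfl := (Nat.lt_succ_iff.1 (by omega : k < N + 1)).lt_or_eq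
    · rw [hpoly (k + 1) hk, Nat.cast_succ, add_sub_cancel_right, hpoly k hk.le]
      exact congrFun (pdx_add_pdy_monomialSum_solutionCoeff N A hk) q
    · rw [Nat.cast_succ, add_sub_cancel_right, htop, hpoly k le_rfl, pdx_monomialSum]
      simp

/-- the leading-order system `∂_x f_{j−1} + ∂_y f_j = 0` (for `0 ≤ j ≤ N+1`,
with `f_{−1} = f_{N+1} = 0`) holds iff there exist real constants `A_{N−n−m,m,n}`
(for `m, n ≥ 0`, `m + n ≤ N`) such that
`f_j = Σ_{n=0}^{N−j} Σ_{m=0}^{j} C(N−n−m, j−m) A_{N−n−m,m,n} x^{N−j−n} (−y)^{j−m}`. -/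
theorem stmt_3 (N : ℕ) (hN : 1 ≤ N) (f : ℤ → ℝ × ℝ → ℝ)
    (hf : ∀ j : ℤ, 0 ≤ j → j ≤ (N : ℤ) → ContDiff ℝ (⊤ : ℕ∞) (f j))
    (hneg : f (-1) = 0) (htop : f ((N : ℤ) + 1) = 0) :
    (∀ j : ℤ, 0 ≤ j → j ≤ (N : ℤ) + 1 →
        ∀ q : ℝ × ℝ, pdx (f (j - 1)) q + pdy (f j) q = 0) ↔
      (∃ A : ℕ → ℕ → ℝ, ∀ j : ℕ, j ≤ N → ∀ q : ℝ × ℝ,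
        f (j : ℤ) q =
          ∑ n ∈ Finset.range (N - j + 1), ∑ m ∈ Finset.range (j + 1),
            (Nat.choose (N - n - m) (j - m) : ℝ) * A m n *
              q.1 ^ (N - j - n) * (-q.2) ^ (j - m)) :=
  stmt_3_general N f hf hneg htop
end
end
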